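/- arXiv:1507.04070 — 4 statements merged into one kernel-verified Lean document; each statement's English description precedes it below -/
import Mathlib

section
/- Let B be a set of Wang tiles with two symbols {0,1} such that every tile B ∈ B satisfies (b(B), l(B)) ≠ (0,1) and (t(B), r(B)) ≠ (1,0). Then Γ_{(n+1)×(n+1)}(B) ≤ (2n+1)^{2n} for all n ≥ 1, and hence the spatial entropy h(B) = 0. -/
open Filter

/-- A symbol (color) for two-symbol Wang tiles. -/
abbrev Col : Type := Fin 2

/-- A Wang tile `(b, l, t, r)`: colors of the bottom, left, top and right edges. -/
abbrev WTile : Type := Col × Col × Col × Col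

def WTile.b (T : WTile) : Col := T.1
def WTile.l (T : WTile) : Col := T.2.1
def WTile.t (T : WTile) : Col := T.2.2.1
def WTile.r (T : WTile) : Col := T.2.2.2

/-- An edge coloring of the `m × n` rectangular lattice `Z_{m×n}`:
colors of the horizontal edges (indexed by their left endpoint `(i,j)`,
`0 ≤ i ≤ m-2`, `0 ≤ j ≤ n-1`) and of the vertical edges (indexed by their
bottom endpoint `(i,j)`, `0 ≤ i ≤ m-1`, `0 ≤ j ≤ n-2`). -/
def Coloring (m n : ℕ) : Type :=
  (Fin (m - 1) × Fin n → Col) × (Fin m × Fin (n - 1) → Col)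

/-- The Wang tile `(b,l,t,r)` carried by the unit square with bottom-left corner `(i,j)`. -/
def Coloring.square {m n : ℕ} (c : Coloring m n) (i : Fin (m - 1)) (j : Fin (n - 1)) :
    WTile :=
  (c.1 (i, ⟨j.1, by have := j.2; omega⟩),
   c.2 (⟨i.1, by have := i.2; omega⟩, j),
   c.1 (i, ⟨j.1 + 1, by have := j.2; omega⟩),
   c.2 (⟨i.1 + 1, by have := i.2; omega⟩, j))

/-- A coloring is `B`-admissible if every unit square carries a tile of `B`. -/
def Admissible (B : Finset WTile) {m n : ℕ} (c : Coloring m n) : Prop :=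
  ∀ i j, c.square i j ∈ B

/-- `Γ_{m×n}(B)`: the number of `B`-admissible edge colorings of the `m × n` lattice. -/
noncomputable def Gamma (B : Finset WTile) (m n : ℕ) : ℕ :=
  Nat.card {c : Coloring m n // Admissible B c}

/-- The spatial entropy `h(B) = lim_{m,n→∞} log Γ_{m×n}(B) / (mn)`. -/
noncomputable def entropy (B : Finset WTile) : ℝ :=
  limsup (fun p : ℕ × ℕ => Real.log (Gamma B p.1 p.2) / (p.1 * p.2)) (atTop ×ˢ atTop)

section WangAux

lemma col_le₁ : ∀ a b : Col, (a, b) ≠ ((0 : Col), (1 : Col)) → (b : ℕ) ≤ (a : ℕ) := by decide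
lemma col_le₂ : ∀ a b : Col, (a, b) ≠ ((1 : Col), (0 : Col)) → (a : ℕ) ≤ (b : ℕ) := by decide

variable {m n : ℕ} {B : Finset WTile}

/-- value of the horizontal edge at `(i,j)` -/
def hval (c : Coloring m n) (i j : ℕ) (hi : i < m - 1) (hj : j < n) : ℕ :=
  (c.1 (⟨i, hi⟩, ⟨j, hj⟩)).1

/-- value of the vertical edge at `(i,j)` -/
def vval (c : Coloring m n) (i j : ℕ) (hi : i < m) (hj : j < n - 1) : ℕ :=
  (c.2 (⟨i, hi⟩, ⟨j, hj⟩)).1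

lemma hval_congr (c : Coloring m n) {i j i' j' : ℕ} (h1 : i = i') (h2 : j = j')
    (hi : i < m - 1) (hj : j < n) (hi' : i' < m - 1) (hj' : j' < n) :
    hval c i j hi hj = hval c i' j' hi' hj' := by subst h1; subst h2; rfl

lemma vval_congr (c : Coloring m n) {i j i' j' : ℕ} (h1 : i = i') (h2 : j = j')
    (hi : i < m) (hj : j < n - 1) (hi' : i' < m) (hj' : j' < n - 1) :
    vval c i j hi hj = vval c i' j' hi' hj' := by subst h1; subst h2; rfl

lemma hval_le_one (c : Coloring m n) (i j hi hj) : hval c i j hi hj ≤ 1 :=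
  Nat.lt_succ_iff.mp (c.1 _).2

lemma vval_le_one (c : Coloring m n) (i j hi hj) : vval c i j hi hj ≤ 1 :=
  Nat.lt_succ_iff.mp (c.2 _).2

variable (hB : ∀ T ∈ B, (T.b, T.l) ≠ ((0 : Col), (1 : Col)) ∧ (T.t, T.r) ≠ ((1 : Col), (0 : Col)))
include hB

/-- `l ≤ b` : vertical edge is at most the horizontal edge at the same spot. -/
lemma step_lb {c : Coloring m n} (hc : Admissible B c) (i j : ℕ)
    (hi : i < m - 1) (hj : j < n - 1) :
    vval c i j (by omega) hj ≤ hval c i j hi (by omega) := by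
  have h := (hB _ (hc ⟨i, hi⟩ ⟨j, hj⟩)).1
  exact col_le₁ _ _ h

/-- `t ≤ r` : top horizontal edge is at most the right vertical edge. -/
lemma step_tr {c : Coloring m n} (hc : Admissible B c) (i j : ℕ)
    (hi : i < m - 1) (hj : j < n - 1) :
    hval c i (j + 1) hi (by omega) ≤ vval c (i + 1) j (by omega) hj := by
  have h := (hB _ (hc ⟨i, hi⟩ ⟨j, hj⟩)).2
  exact col_le₂ _ _ h

lemma chainV {c : Coloring m n} (hc : Admissible B c) :
    ∀ (k i j' : ℕ) (hi : i + k < m) (hj : j' + k < n - 1),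
      vval c i (j' + k) (by omega) hj ≤ vval c (i + k) j' hi (by omega) := by
  intro k
  induction k with
  | zero => intro i j' hi hj; exact le_refl _
  | succ k IH =>
    intro i j' hi hj
    calc vval c i (j' + (k + 1)) (by omega) hj
        ≤ hval c i (j' + k + 1) (by omega) (by omega) := step_lb hB hc i (j' + k + 1) (by omega) (by omega)
      _ ≤ vval c (i + 1) (j' + k) (by omega) (by omega) := step_tr hB hc i (j' + k) (by omega) (by omega)
      _ ≤ vval c (i + 1 + k) j' (by omega) (by omega) := IH (i + 1) j' (by omega) (by omega)
      _ = vval c (i + (k + 1)) j' hi (by omega) := vval_congr c (by omega) rfl _ _ _ _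

lemma chainH {c : Coloring m n} (hc : Admissible B c) :
    ∀ (k i j' : ℕ) (hi : i + k < m - 1) (hj : j' + k < n),
      hval c i (j' + k) (by omega) hj ≤ hval c (i + k) j' hi (by omega) := by
  intro k
  induction k with
  | zero => intro i j' hi hj; exact le_refl _
  | succ k IH =>
    intro i j' hi hj
    calc hval c i (j' + (k + 1)) (by omega) hj
        ≤ vval c (i + 1) (j' + k) (by omega) (by omega) := step_tr hB hc i (j' + k) (by omega) (by omega)
      _ ≤ hval c (i + 1) (j' + k) (by omega) (by omega) := step_lb hB hc (i + 1) (j' + k) (by omega) (by omega)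
      _ ≤ hval c (i + 1 + k) j' (by omega) (by omega) := IH (i + 1) j' (by omega) (by omega)
      _ = hval c (i + (k + 1)) j' hi (by omega) := hval_congr c (by omega) rfl _ _ _ _

end WangAux

section WangAux2

variable {m n : ℕ} {B : Finset WTile}

abbrev WEdge (m n : ℕ) := (Fin (m - 1) × Fin n) ⊕ (Fin m × Fin (n - 1))

def weval (c : Coloring m n) : WEdge m n → ℕ :=
  Sum.elim (fun e => (c.1 e).1) (fun e => (c.2 e).1)

def wediag : WEdge m n → ℕ :=
  Sum.elim (fun e => e.1.1 + e.2.1) (fun e => e.1.1 + e.2.1)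

def wekey : WEdge m n → ℕ :=
  Sum.elim (fun e => 2 * e.1.1 + 1) (fun e => 2 * e.1.1)

lemma weval_le_one (c : Coloring m n) (e : WEdge m n) : weval c e ≤ 1 := by
  rcases e with e | e
  · exact Nat.lt_succ_iff.mp (c.1 e).2
  · exact Nat.lt_succ_iff.mp (c.2 e).2

variable (hB : ∀ T ∈ B, (T.b, T.l) ≠ ((0 : Col), (1 : Col)) ∧ (T.t, T.r) ≠ ((1 : Col), (0 : Col)))
include hB

lemma wmono {c : Coloring m n} (hc : Admissible B c) (e e' : WEdge m n)
    (hd : wediag e = wediag e') (hk : wekey e ≤ wekey e') :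
    weval c e ≤ weval c e' := by
  rcases e with ⟨⟨i, hi⟩, ⟨j, hj⟩⟩ | ⟨⟨i, hi⟩, ⟨j, hj⟩⟩ <;>
    rcases e' with ⟨⟨i', hi'⟩, ⟨j', hj'⟩⟩ | ⟨⟨i', hi'⟩, ⟨j', hj'⟩⟩ <;>
      simp only [wediag, wekey, weval, Sum.elim_inl, Sum.elim_inr] at hd hk ⊢
  · -- h ≤ h
    show hval c i j hi hj ≤ hval c i' j' hi' hj'
    calc hval c i j hi hj
        = hval c i (j' + (i' - i)) (by omega) (by omega) := hval_congr c rfl (by omega) _ _ _ _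
      _ ≤ hval c (i + (i' - i)) j' (by omega) (by omega) := chainH hB hc (i' - i) i j' (by omega) (by omega)
      _ = hval c i' j' hi' hj' := hval_congr c (by omega) rfl _ _ _ _
  · -- h ≤ v : i < i'
    show hval c i j hi hj ≤ vval c i' j' hi' hj'
    calc hval c i j hi hj
        = hval c i (j' + (i' - i - 1) + 1) hi (by omega) := hval_congr c rfl (by omega) _ _ _ _
      _ ≤ vval c (i + 1) (j' + (i' - i - 1)) (by omega) (by omega) :=
          step_tr hB hc i (j' + (i' - i - 1)) (by omega) (by omega)
      _ ≤ vval c (i + 1 + (i' - i - 1)) j' (by omega) (by omega) :=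
          chainV hB hc (i' - i - 1) (i + 1) j' (by omega) (by omega)
      _ = vval c i' j' hi' hj' := vval_congr c (by omega) rfl _ _ _ _
  · -- v ≤ h : i ≤ i'
    show vval c i j hi hj ≤ hval c i' j' hi' hj'
    calc vval c i j hi hj
        ≤ hval c i j (by omega) (by omega) := step_lb hB hc i j (by omega) (by omega)
      _ = hval c i (j' + (i' - i)) (by omega) (by omega) := hval_congr c rfl (by omega) _ _ _ _
      _ ≤ hval c (i + (i' - i)) j' (by omega) (by omega) := chainH hB hc (i' - i) i j' (by omega) (by omega)
      _ = hval c i' j' hi' hj' := hval_congr c (by omega) rfl _ _ _ _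
  · -- v ≤ v
    show vval c i j hi hj ≤ vval c i' j' hi' hj'
    calc vval c i j hi hj
        = vval c i (j' + (i' - i)) (by omega) (by omega) := vval_congr c rfl (by omega) _ _ _ _
      _ ≤ vval c (i + (i' - i)) j' (by omega) (by omega) := chainV hB hc (i' - i) i j' (by omega) (by omega)
      _ = vval c i' j' hi' hj' := vval_congr c (by omega) rfl _ _ _ _

end WangAux2

section Upset

open Finset

lemma upset_subset {α : Type*} [DecidableEq α] (A : Finset α) (key : α → ℕ) (f g : α → ℕ)
    (hf1 : ∀ e ∈ A, f e ≤ 1) (hg1 : ∀ e ∈ A, g e ≤ 1)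
    (hfm : ∀ e ∈ A, ∀ e' ∈ A, key e ≤ key e' → f e ≤ f e')
    (hgm : ∀ e ∈ A, ∀ e' ∈ A, key e ≤ key e' → g e ≤ g e')
    (hcard : (A.filter (fun e => f e = 1)).card ≤ (A.filter (fun e => g e = 1)).card) :
    A.filter (fun e => f e = 1) ⊆ A.filter (fun e => g e = 1) := by
  intro e he
  by_contra hne
  rw [mem_filter] at he hne
  push_neg at hne
  have heA := he.1
  have hge : g e = 0 := by have h4 := hne heA; have := hg1 e heA; omega
  have hsub : A.filter (fun e => g e = 1) ⊆ (A.filter (fun e => f e = 1)).erase e := by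
    intro x hx
    rw [mem_filter] at hx
    have hkey : key e ≤ key x := by
      by_contra hk
      have := hgm x hx.1 e heA (by omega)
      omega
    have hfx : f x = 1 := by
      have h1 := hfm e heA x hx.1 hkey
      have := hf1 x hx.1
      omega
    have hxe : x ≠ e := by
      intro h; subst h; omega
    exact mem_erase.2 ⟨hxe, mem_filter.2 ⟨hx.1, hfx⟩⟩
  have h1 := card_le_card hsub
  have h2 : ((A.filter (fun e => f e = 1)).erase e).card
      < (A.filter (fun e => f e = 1)).card :=
    card_erase_lt_of_mem (mem_filter.2 ⟨heA, he.2⟩)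
  exact absurd (lt_of_le_of_lt hcard (lt_of_le_of_lt h1 h2)) (lt_irrefl _)

lemma upset_eq {α : Type*} [DecidableEq α] (A : Finset α) (key : α → ℕ) (f g : α → ℕ)
    (hf1 : ∀ e ∈ A, f e ≤ 1) (hg1 : ∀ e ∈ A, g e ≤ 1)
    (hfm : ∀ e ∈ A, ∀ e' ∈ A, key e ≤ key e' → f e ≤ f e')
    (hgm : ∀ e ∈ A, ∀ e' ∈ A, key e ≤ key e' → g e ≤ g e')
    (hsum : ∑ e ∈ A, f e = ∑ e ∈ A, g e) :
    ∀ e ∈ A, f e = g e := by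
  have hcf : ∀ (f : α → ℕ), (∀ e ∈ A, f e ≤ 1) → ∑ e ∈ A, f e = (A.filter (fun e => f e = 1)).card := by
    intro f hf1
    rw [← sum_filter_add_sum_filter_not A (fun e => f e = 1)]
    have h1 : ∑ e ∈ A.filter (fun e => f e = 1), f e = (A.filter (fun e => f e = 1)).card := by
      rw [card_eq_sum_ones]
      exact sum_congr rfl (fun x hx => (mem_filter.1 hx).2)
    have h2 : ∑ e ∈ A.filter (fun e => ¬ f e = 1), f e = 0 := by
      refine sum_eq_zero (fun x hx => ?_)
      rw [mem_filter] at hx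
      have := hf1 x hx.1
      omega
    omega
  have hcard : (A.filter (fun e => f e = 1)).card = (A.filter (fun e => g e = 1)).card := by
    rw [← hcf f hf1, ← hcf g hg1, hsum]
  have hST := upset_subset A key f g hf1 hg1 hfm hgm (le_of_eq hcard)
  have hTS := upset_subset A key g f hg1 hf1 hgm hfm (le_of_eq hcard.symm)
  intro e he
  have hf := hf1 e he
  have hg := hg1 e he
  rcases Nat.lt_or_ge (f e) 1 with h | h
  · -- f e = 0
    have hgne : g e ≠ 1 := by
      intro hg1'
      have h3 := (mem_filter.1 (hTS (mem_filter.2 ⟨he, hg1'⟩))).2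
      omega
    omega
  · have hf1' : f e = 1 := by omega
    have h3 := (mem_filter.1 (hST (mem_filter.2 ⟨he, hf1'⟩))).2
    omega

end Upset

section WangCount

open Finset

variable {m n : ℕ} {B : Finset WTile}

/-- sum of the horizontal edge values on antidiagonal `d` -/
def SDh (c : Coloring m n) (d : ℕ) : ℕ :=
  ∑ p ∈ univ.filter (fun p : Fin (m - 1) × Fin n => p.1.1 + p.2.1 = d), (c.1 p).1

/-- sum of the vertical edge values on antidiagonal `d` -/
def SDv (c : Coloring m n) (d : ℕ) : ℕ :=
  ∑ p ∈ univ.filter (fun p : Fin m × Fin (n - 1) => p.1.1 + p.2.1 = d), (c.2 p).1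

/-- total sum of the edge values on antidiagonal `d` -/
def SD (c : Coloring m n) (d : ℕ) : ℕ := SDh c d + SDv c d

lemma SD_eq_edge (c : Coloring m n) (d : ℕ) :
    SD c d = ∑ e ∈ univ.filter (fun e : WEdge m n => wediag e = d), weval c e := by
  rw [Finset.sum_filter]
  simp [SD, SDh, SDv, Finset.sum_filter, Fintype.sum_sum_type, weval, wediag]
  convert rfl <;> split_ifs <;> simp_all

lemma SDh_le (c : Coloring m n) (d : ℕ) : SDh c d ≤ min (m - 1) n := by
  set A := univ.filter (fun p : Fin (m - 1) × Fin n => p.1.1 + p.2.1 = d) with hA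
  have hsum : SDh c d ≤ A.card := by
    have := Finset.sum_le_card_nsmul A (fun p => (c.1 p).1) 1
      (fun p _ => Nat.lt_succ_iff.mp (c.1 p).2)
    simpa [SDh, hA] using this
  have h1 : A.card ≤ m - 1 := by
    have hle : A.card ≤ (univ : Finset (Fin (m - 1))).card := by
      refine Finset.card_le_card_of_injOn (fun p => p.1) (fun a _ => mem_univ _) ?_
      rintro ⟨⟨a1, ha1⟩, ⟨a2, ha2⟩⟩ ha ⟨⟨b1, hb1⟩, ⟨b2, hb2⟩⟩ hb hab
      have h1 := (mem_filter.1 ha).2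
      have h2 := (mem_filter.1 hb).2
      simp only [Fin.mk.injEq, Prod.mk.injEq] at hab h1 h2 ⊢
      omega
    simpa using hle
  have h2 : A.card ≤ n := by
    have hle : A.card ≤ (univ : Finset (Fin n)).card := by
      refine Finset.card_le_card_of_injOn (fun p => p.2) (fun a _ => mem_univ _) ?_
      rintro ⟨⟨a1, ha1⟩, ⟨a2, ha2⟩⟩ ha ⟨⟨b1, hb1⟩, ⟨b2, hb2⟩⟩ hb hab
      have h1 := (mem_filter.1 ha).2
      have h2 := (mem_filter.1 hb).2
      simp only [Fin.mk.injEq, Prod.mk.injEq] at hab h1 h2 ⊢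
      omega
    simpa using hle
  omega

lemma SDv_le (c : Coloring m n) (d : ℕ) : SDv c d ≤ min m (n - 1) := by
  set A := univ.filter (fun p : Fin m × Fin (n - 1) => p.1.1 + p.2.1 = d) with hA
  have hsum : SDv c d ≤ A.card := by
    have := Finset.sum_le_card_nsmul A (fun p => (c.2 p).1) 1
      (fun p _ => Nat.lt_succ_iff.mp (c.2 p).2)
    simpa [SDv, hA] using this
  have h1 : A.card ≤ m := by
    have hle : A.card ≤ (univ : Finset (Fin m)).card := by
      refine Finset.card_le_card_of_injOn (fun p => p.1) (fun a _ => mem_univ _) ?_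
      rintro ⟨⟨a1, ha1⟩, ⟨a2, ha2⟩⟩ ha ⟨⟨b1, hb1⟩, ⟨b2, hb2⟩⟩ hb hab
      have h1 := (mem_filter.1 ha).2
      have h2 := (mem_filter.1 hb).2
      simp only [Fin.mk.injEq, Prod.mk.injEq] at hab h1 h2 ⊢
      omega
    simpa using hle
  have h2 : A.card ≤ n - 1 := by
    have hle : A.card ≤ (univ : Finset (Fin (n - 1))).card := by
      refine Finset.card_le_card_of_injOn (fun p => p.2) (fun a _ => mem_univ _) ?_
      rintro ⟨⟨a1, ha1⟩, ⟨a2, ha2⟩⟩ ha ⟨⟨b1, hb1⟩, ⟨b2, hb2⟩⟩ hb hab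
      have h1 := (mem_filter.1 ha).2
      have h2 := (mem_filter.1 hb).2
      simp only [Fin.mk.injEq, Prod.mk.injEq] at hab h1 h2 ⊢
      omega
    simpa using hle
  omega

lemma SD_le (c : Coloring m n) (d : ℕ) : SD c d ≤ min (m + n - 2) (2 * min m n) := by
  have h1 := SDh_le c d
  have h2 := SDv_le c d
  have : SD c d = SDh c d + SDv c d := rfl
  omega

lemma gamma_le (hB : ∀ T ∈ B, (T.b, T.l) ≠ ((0 : Col), (1 : Col)) ∧
      (T.t, T.r) ≠ ((1 : Col), (0 : Col))) (m n : ℕ) :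
    Gamma B m n ≤ (min (m + n - 2) (2 * min m n) + 1) ^ (m + n - 2) := by
  classical
  set K := min (m + n - 2) (2 * min m n) with hK
  have hinj : Function.Injective
      (fun (c : {c : Coloring m n // Admissible B c}) (d : Fin (m + n - 2)) =>
        (⟨SD c.1 d.1, by have := SD_le c.1 d.1; omega⟩ : Fin (K + 1))) := by
    intro c c' h
    have hSD : ∀ d, d < m + n - 2 → SD c.1 d = SD c'.1 d := by
      intro d hd
      have := congrFun h ⟨d, hd⟩
      simpa using congrArg Fin.val this
    have hedge : ∀ e : WEdge m n, weval c.1 e = weval c'.1 e := by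
      intro e
      have hd : wediag e < m + n - 2 := by
        rcases e with ⟨⟨i, hi⟩, ⟨j, hj⟩⟩ | ⟨⟨i, hi⟩, ⟨j, hj⟩⟩ <;>
          simp only [wediag, Sum.elim_inl, Sum.elim_inr] <;> omega
      refine upset_eq (univ.filter (fun e' : WEdge m n => wediag e' = wediag e)) wekey
        (weval c.1) (weval c'.1)
        (fun a _ => weval_le_one _ _) (fun a _ => weval_le_one _ _)
        (fun a ha b hb hk => wmono hB c.2 a b
          (by rw [(mem_filter.1 ha).2, (mem_filter.1 hb).2]) hk)
        (fun a ha b hb hk => wmono hB c'.2 a b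
          (by rw [(mem_filter.1 ha).2, (mem_filter.1 hb).2]) hk)
        ?_ e (mem_filter.2 ⟨mem_univ _, rfl⟩)
      rw [← SD_eq_edge, ← SD_eq_edge]
      exact hSD _ hd
    apply Subtype.ext
    have h1 : c.1.1 = c'.1.1 := funext fun p => Fin.val_injective (hedge (Sum.inl p))
    have h2 : c.1.2 = c'.1.2 := funext fun p => Fin.val_injective (hedge (Sum.inr p))
    exact Prod.ext h1 h2
  calc Gamma B m n ≤ Nat.card (Fin (m + n - 2) → Fin (K + 1)) :=
        Nat.card_le_card_of_injective _ hinj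
    _ = (K + 1) ^ (m + n - 2) := by simp [Nat.card_eq_fintype_card]

end WangCount

section WangEntropy

open Filter

lemma phi_tendsto : Tendsto (fun x : ℕ => (Real.log 3 + Real.log x) / x) atTop (nhds 0) := by
  have h1 : Tendsto (fun x : ℝ => Real.log 3 / x) atTop (nhds 0) :=
    tendsto_const_nhds.div_atTop tendsto_id
  have h2 : Tendsto (fun x : ℝ => Real.log x / x) atTop (nhds 0) := by
    simpa using Real.tendsto_pow_log_div_mul_add_atTop 1 0 1 one_ne_zero
  have hreal : Tendsto (fun x : ℝ => (Real.log 3 + Real.log x) / x) atTop (nhds 0) := by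
    simpa [add_div] using h1.add h2
  exact hreal.comp tendsto_natCast_atTop_atTop

lemma f_le_g {B : Finset WTile}
    (hB : ∀ T ∈ B, (T.b, T.l) ≠ ((0 : Col), (1 : Col)) ∧ (T.t, T.r) ≠ ((1 : Col), (0 : Col)))
    (m n : ℕ) (hm : 1 ≤ m) (hn : 1 ≤ n) :
    Real.log (Gamma B m n) / ((m : ℝ) * n) ≤
      (Real.log 3 + Real.log m) / m + (Real.log 3 + Real.log n) / n := by
  have hm' : (0 : ℝ) < m := by exact_mod_cast hm
  have hn' : (0 : ℝ) < n := by exact_mod_cast hn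
  by_cases hΓ : Gamma B m n = 0
  · rw [hΓ]
    simp only [Nat.cast_zero, Real.log_zero, zero_div]
    have t1 : 0 ≤ Real.log 3 := Real.log_nonneg (by norm_num)
    have t2 : 0 ≤ Real.log (m : ℕ) := Real.log_natCast_nonneg m
    have t3 : 0 ≤ Real.log (n : ℕ) := Real.log_natCast_nonneg n
    positivity
  · have hΓ1 : 1 ≤ Gamma B m n := Nat.one_le_iff_ne_zero.2 hΓ
    set K' := min m n with hK'
    have hK1 : 1 ≤ K' := le_min hm hn
    -- natural number bound
    have hnat : Gamma B m n ≤ (3 * K') ^ (m + n - 2) := by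
      calc Gamma B m n ≤ (min (m + n - 2) (2 * K') + 1) ^ (m + n - 2) := gamma_le hB m n
        _ ≤ (3 * K') ^ (m + n - 2) := Nat.pow_le_pow_left (by omega) _
    have hKpos : (0 : ℝ) < (K' : ℝ) := by exact_mod_cast hK1
    set L : ℝ := Real.log 3 + Real.log K' with hL
    have hL0 : 0 ≤ L := add_nonneg (Real.log_nonneg (by norm_num)) (Real.log_natCast_nonneg _)
    have hlog : Real.log (Gamma B m n) ≤ ((m : ℝ) + n) * L := by
      have s1 : Real.log (Gamma B m n) ≤ Real.log (((3 * K') ^ (m + n - 2) : ℕ) : ℝ) := by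
        apply Real.log_le_log (by exact_mod_cast hΓ1)
        exact_mod_cast hnat
      have s2 : Real.log (((3 * K') ^ (m + n - 2) : ℕ) : ℝ) = ((m + n - 2 : ℕ) : ℝ) * L := by
        push_cast
        rw [Real.log_pow]
        rw [Real.log_mul (by norm_num) (ne_of_gt hKpos)]
      have s3 : ((m + n - 2 : ℕ) : ℝ) * L ≤ ((m : ℝ) + n) * L := by
        apply mul_le_mul_of_nonneg_right _ hL0
        have : ((m + n - 2 : ℕ) : ℝ) ≤ ((m + n : ℕ) : ℝ) := by
          exact_mod_cast Nat.sub_le (m + n) 2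
        simpa using this
      calc Real.log (Gamma B m n) ≤ _ := s1
        _ = _ := s2
        _ ≤ _ := s3
    calc Real.log (Gamma B m n) / ((m : ℝ) * n)
        ≤ (((m : ℝ) + n) * L) / ((m : ℝ) * n) := by
          exact (div_le_div_iff_of_pos_right (by positivity)).2 hlog
      _ = L / m + L / n := by field_simp; ring
      _ ≤ (Real.log 3 + Real.log m) / m + (Real.log 3 + Real.log n) / n := by
          have hm2 : L ≤ Real.log 3 + Real.log m := by
            have : Real.log (K' : ℝ) ≤ Real.log (m : ℝ) :=
              Real.log_le_log hKpos (by exact_mod_cast min_le_left m n)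
            simpa [hL] using add_le_add_left this (Real.log 3)
          have hn2 : L ≤ Real.log 3 + Real.log n := by
            have : Real.log (K' : ℝ) ≤ Real.log (n : ℝ) :=
              Real.log_le_log hKpos (by exact_mod_cast min_le_right m n)
            simpa [hL] using add_le_add_left this (Real.log 3)
          gcongr
end WangEntropy

/-- If every tile of `B` satisfies `(b,l) ≠ (0,1)` and `(t,r) ≠ (1,0)`, then
`Γ_{(n+1)×(n+1)}(B) ≤ (2n+1)^{2n}` and the spatial entropy vanishes. -/
theorem entropy_zero_of_antidiagonal_monotone (B : Finset WTile)
    (hB : ∀ T ∈ B, (T.b, T.l) ≠ ((0 : Col), (1 : Col)) ∧ (T.t, T.r) ≠ ((1 : Col), (0 : Col))) :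
    (∀ n : ℕ, 1 ≤ n → Gamma B (n + 1) (n + 1) ≤ (2 * n + 1) ^ (2 * n)) ∧
      entropy B = 0 := by
  constructor
  · intro N hN
    have h := gamma_le hB (N + 1) (N + 1)
    have e1 : (N + 1) + (N + 1) - 2 = 2 * N := by omega
    rw [e1] at h
    have e2 : min (2 * N) (2 * min (N + 1) (N + 1)) = 2 * N := by omega
    rw [e2] at h
    exact h
  · set F : Filter (ℕ × ℕ) := atTop ×ˢ atTop with hF
    haveI : F.NeBot := by rw [hF]; exact prod_neBot.2 ⟨atTop_neBot, atTop_neBot⟩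
    set f : ℕ × ℕ → ℝ := fun p => Real.log (Gamma B p.1 p.2) / (p.1 * p.2) with hf
    set φ : ℕ → ℝ := fun x => (Real.log 3 + Real.log x) / x with hφ
    set g : ℕ × ℕ → ℝ := fun p => φ p.1 + φ p.2 with hg
    have hf0 : ∀ p, 0 ≤ f p := fun p =>
      div_nonneg (Real.log_natCast_nonneg _) (by positivity)
    have hgt : Tendsto g F (nhds 0) := by
      have := (phi_tendsto.comp (tendsto_fst (f := (atTop : Filter ℕ)) (g := atTop))).add
        (phi_tendsto.comp (tendsto_snd (f := (atTop : Filter ℕ)) (g := atTop)))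
      simpa [hF, hg, Function.comp] using this
    have hev : f ≤ᶠ[F] g := by
      have h1 : ∀ᶠ p : ℕ × ℕ in F, 1 ≤ p.1 ∧ 1 ≤ p.2 :=
        (eventually_ge_atTop 1).prod_mk (eventually_ge_atTop 1)
      filter_upwards [h1] with p hp
      exact f_le_g hB p.1 p.2 hp.1 hp.2
    have hbg : F.IsBoundedUnder (· ≤ ·) g := hgt.isBoundedUnder_le
    have hbf : F.IsBoundedUnder (· ≤ ·) f := hbg.mono_le hev
    have hcf : F.IsCoboundedUnder (· ≤ ·) f :=
      (isBoundedUnder_of ⟨0, fun p => hf0 p⟩ : F.IsBoundedUnder (· ≥ ·) f).isCoboundedUnder_le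
    have : entropy B = limsup f F := rfl
    rw [this]
    refine le_antisymm ?_ ?_
    · calc limsup f F ≤ limsup g F := limsup_le_limsup hev hcf hbg
        _ = 0 := hgt.limsup_eq
    · exact le_limsup_of_frequently_le ((Eventually.of_forall hf0).frequently) hbf
end

section
/- Let B be a set of Wang tiles with two symbols {0,1} satisfying: (i) every B ∈ B has (l(B), r(B)) ∈ {(0,0),(0,1),(1,1)}; (ii) any two tiles in B with (l,r) = (0,0) have distinct bottom colors; (iii) any two tiles in B with (l,r) = (1,1) have distinct bottom colors. Then Γ_{(n+1)×(n+1)}(B) ≤ 2^{4n}(n+2)^n for all n ≥ 1, and hence h(B) = 0. -/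
open Filter

-- Auxiliary definitions and lemmas
def ext1 (m : ℕ) (v : Fin (m+1) → Col) : ℕ → Col :=
  fun k => if h : k < m+1 then v ⟨k, h⟩ else 1

lemma ext1_exists (m : ℕ) (v : Fin (m+1) → Col) : ∃ k, ext1 m v k = 1 :=
  ⟨m+1, by simp [ext1]⟩

def firstOne (m : ℕ) (v : Fin (m+1) → Col) : ℕ := Nat.find (ext1_exists m v)

lemma firstOne_le (m : ℕ) (v : Fin (m+1) → Col) : firstOne m v ≤ m + 1 :=
  Nat.find_le (by simp [ext1])

def Propag (m : ℕ) (v : Fin (m+1) → Col) : Prop :=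
  ∀ k (h : k + 1 < m + 1), v ⟨k, by omega⟩ = 1 → v ⟨k+1, h⟩ = 1

lemma ext1_propag {m : ℕ} {v : Fin (m+1) → Col} (H : Propag m v) :
    ∀ k, firstOne m v ≤ k → ext1 m v k = 1 := by
  intro k hk
  induction k with
  | zero =>
    have h0 : firstOne m v = 0 := Nat.le_zero.mp hk
    have : ext1 m v (firstOne m v) = 1 := Nat.find_spec (ext1_exists m v)
    rwa [h0] at this
  | succ k ih =>
    rcases Nat.lt_or_ge (firstOne m v) (k+1) with h | h
    · have hk' := ih (by omega)
      by_cases hlt : k + 1 < m + 1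
      · have hkm : k < m + 1 := by omega
        rw [ext1, dif_pos hkm] at hk'
        have := H k hlt hk'
        rw [ext1, dif_pos hlt]
        exact this
      · rw [ext1, dif_neg hlt]
    · have h0 : firstOne m v = k + 1 := by omega
      have : ext1 m v (firstOne m v) = 1 := Nat.find_spec (ext1_exists m v)
      rwa [h0] at this

lemma vert_eq {m : ℕ} {v : Fin (m+1) → Col} (H : Propag m v) (k : ℕ) (hk : k < m + 1) :
    v ⟨k, hk⟩ = if k < firstOne m v then 0 else 1 := by
  split_ifs with h
  · have hne := Nat.find_min (ext1_exists m v) h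
    rw [ext1, dif_pos hk] at hne
    have h2 := (v ⟨k, hk⟩).2
    rw [Fin.ext_iff] at hne ⊢
    simp only [Fin.val_one, Fin.val_zero] at *
    omega
  · have := ext1_propag H k (by omega)
    rwa [ext1, dif_pos hk] at this

section Code
variable {m n : ℕ}

def vline (c : Coloring (m+1) (n+1)) (j : Fin n) : Fin (m+1) → Col :=
  fun i => c.2 (i, j)

def Z (c : Coloring (m+1) (n+1)) (j : Fin n) : ℕ := firstOne m (vline c j)

def code (c : Coloring (m+1) (n+1)) :
    (Fin m → Col) × (Fin n → Fin (m+2)) × (Fin n → Col) :=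
  (fun i => c.1 (i, ⟨0, by omega⟩),
   fun j => ⟨Z c j, by have := firstOne_le m (vline c j); simp only [Z]; omega⟩,
   fun j => if h : 1 ≤ Z c j ∧ Z c j - 1 < m
            then c.1 (⟨Z c j - 1, h.2⟩, ⟨j.1 + 1, by have := j.2; omega⟩) else 0)

lemma propag_of_adm {B : Finset WTile}
    (h1 : ∀ T ∈ B, (T.l, T.r) ∈
      ({((0 : Col), (0 : Col)), (0, 1), (1, 1)} : Set (Col × Col)))
    {c : Coloring (m+1) (n+1)} (hc : Admissible B c) (j : Fin n) :
    Propag m (vline c j) := by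
  intro k h hk1
  have hsq := hc ⟨k, by omega⟩ j
  have hmem := h1 _ hsq
  simp only [Set.mem_insert_iff, Set.mem_singleton_iff, Prod.mk.injEq,
    WTile.l, WTile.r, Coloring.square, vline] at hmem hk1 ⊢
  rcases hmem with ⟨hl, hr⟩ | ⟨hl, hr⟩ | ⟨hl, hr⟩ <;> simp_all

lemma code_injective {B : Finset WTile}
    (h1 : ∀ T ∈ B, (T.l, T.r) ∈
      ({((0 : Col), (0 : Col)), (0, 1), (1, 1)} : Set (Col × Col)))
    (h2 : ∀ T₁ ∈ B, ∀ T₂ ∈ B, T₁.l = 0 → T₁.r = 0 → T₂.l = 0 → T₂.r = 0 →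
      T₁ ≠ T₂ → T₁.b ≠ T₂.b)
    (h3 : ∀ T₁ ∈ B, ∀ T₂ ∈ B, T₁.l = 1 → T₁.r = 1 → T₂.l = 1 → T₂.r = 1 →
      T₁ ≠ T₂ → T₁.b ≠ T₂.b)
    {c c' : Coloring (m+1) (n+1)} (hc : Admissible B c) (hc' : Admissible B c')
    (h : code c = code c') : c = c' := by
  have ha : (code c).1 = (code c').1 := congrArg Prod.fst h
  have hbc : (code c).2.1 = (code c').2.1 := congrArg (fun x => x.2.1) h
  have hd : (code c).2.2 = (code c').2.2 := congrArg (fun x => x.2.2) h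
  have hZ : ∀ j, Z c j = Z c' j := by
    intro j
    have := congrFun hbc j
    simpa [code, Fin.ext_iff] using this
  have hv : ∀ (i : Fin (m+1)) (j : Fin n), c.2 (i, j) = c'.2 (i, j) := by
    intro i j
    have e1 : c.2 (i, j) = if i.1 < Z c j then 0 else 1 :=
      vert_eq (propag_of_adm h1 hc j) i.1 i.2
    have e2 : c'.2 (i, j) = if i.1 < Z c' j then 0 else 1 :=
      vert_eq (propag_of_adm h1 hc' j) i.1 i.2
    rw [e1, e2, hZ j]
  have hh : ∀ (jv : ℕ) (hj : jv < n + 1) (i : Fin m),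
      c.1 (i, ⟨jv, hj⟩) = c'.1 (i, ⟨jv, hj⟩) := by
    intro jv
    induction jv with
    | zero => intro hj i; exact congrFun ha i
    | succ jv ih =>
      intro hj i
      have hjn : jv < n := by omega
      have hT := hc i ⟨jv, hjn⟩
      have hT' := hc' i ⟨jv, hjn⟩
      have hbb : (c.square i ⟨jv, hjn⟩).b = (c'.square i ⟨jv, hjn⟩).b := ih (by omega) i
      have hll : (c.square i ⟨jv, hjn⟩).l = (c'.square i ⟨jv, hjn⟩).l := hv _ _
      have hrr : (c.square i ⟨jv, hjn⟩).r = (c'.square i ⟨jv, hjn⟩).r := hv _ _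
      show (c.square i ⟨jv, hjn⟩).t = (c'.square i ⟨jv, hjn⟩).t
      have hmem := h1 _ hT
      simp only [Set.mem_insert_iff, Set.mem_singleton_iff, Prod.mk.injEq] at hmem
      rcases hmem with ⟨hl, hr⟩ | ⟨hl, hr⟩ | ⟨hl, hr⟩
      · have heq : c.square i ⟨jv, hjn⟩ = c'.square i ⟨jv, hjn⟩ := by
          by_contra hne
          exact h2 _ hT _ hT' hl hr (hll ▸ hl) (hrr ▸ hr) hne hbb
        rw [heq]
      · -- transition square
        have e1 : (c.square i ⟨jv, hjn⟩).l = if i.1 < Z c ⟨jv, hjn⟩ then 0 else 1 :=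
          vert_eq (propag_of_adm h1 hc ⟨jv, hjn⟩) i.1 (by omega)
        have e2 : (c.square i ⟨jv, hjn⟩).r = if i.1 + 1 < Z c ⟨jv, hjn⟩ then 0 else 1 :=
          vert_eq (propag_of_adm h1 hc ⟨jv, hjn⟩) (i.1 + 1) (by omega)
        have p1 : i.1 < Z c ⟨jv, hjn⟩ := by
          by_contra hp
          rw [e1, if_neg hp] at hl
          exact absurd hl (by decide)
        have p2 : ¬ (i.1 + 1 < Z c ⟨jv, hjn⟩) := by
          intro hp
          rw [e2, if_pos hp] at hr
          exact absurd hr (by decide)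
        have hZj : Z c ⟨jv, hjn⟩ = i.1 + 1 := by omega
        have cond : 1 ≤ Z c ⟨jv, hjn⟩ ∧ Z c ⟨jv, hjn⟩ - 1 < m :=
          ⟨by omega, by have := i.2; omega⟩
        have cond' : 1 ≤ Z c' ⟨jv, hjn⟩ ∧ Z c' ⟨jv, hjn⟩ - 1 < m := by
          rw [← hZ]; exact cond
        have h5 := congrFun hd ⟨jv, hjn⟩
        simp only [code] at h5
        rw [dif_pos cond, dif_pos cond'] at h5
        have hidx : (⟨Z c ⟨jv, hjn⟩ - 1, cond.2⟩ : Fin m) = i :=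
          Fin.ext (by show Z c ⟨jv, hjn⟩ - 1 = i.1; omega)
        have hidx' : (⟨Z c' ⟨jv, hjn⟩ - 1, cond'.2⟩ : Fin m) = i :=
          Fin.ext (by show Z c' ⟨jv, hjn⟩ - 1 = i.1; have := hZ ⟨jv, hjn⟩; omega)
        rw [hidx, hidx'] at h5
        exact h5
      · have heq : c.square i ⟨jv, hjn⟩ = c'.square i ⟨jv, hjn⟩ := by
          by_contra hne
          exact h3 _ hT _ hT' hl hr (hll ▸ hl) (hrr ▸ hr) hne hbb
        rw [heq]
  have hfst : c.1 = c'.1 := funext fun x => by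
    obtain ⟨i, j⟩ := x; exact hh j.1 j.2 i
  have hsnd : c.2 = c'.2 := funext fun x => by
    obtain ⟨i, j⟩ := x; exact hv i j
  exact Prod.ext hfst hsnd

end Code

lemma gamma_le_s3 (B : Finset WTile)
    (h1 : ∀ T ∈ B, (T.l, T.r) ∈
      ({((0 : Col), (0 : Col)), (0, 1), (1, 1)} : Set (Col × Col)))
    (h2 : ∀ T₁ ∈ B, ∀ T₂ ∈ B, T₁.l = 0 → T₁.r = 0 → T₂.l = 0 → T₂.r = 0 →
      T₁ ≠ T₂ → T₁.b ≠ T₂.b)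
    (h3 : ∀ T₁ ∈ B, ∀ T₂ ∈ B, T₁.l = 1 → T₁.r = 1 → T₂.l = 1 → T₂.r = 1 →
      T₁ ≠ T₂ → T₁.b ≠ T₂.b)
    (m n : ℕ) :
    Gamma B (m+1) (n+1) ≤ 2 ^ m * (m+2) ^ n * 2 ^ n := by
  have key : Gamma B (m+1) (n+1) ≤
      Nat.card ((Fin m → Col) × (Fin n → Fin (m+2)) × (Fin n → Col)) :=
    Nat.card_le_card_of_injective
      (fun c : {c : Coloring (m+1) (n+1) // Admissible B c} => code c.1)
      (fun c c' hcc => Subtype.ext (code_injective h1 h2 h3 c.2 c'.2 hcc))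
  calc Gamma B (m+1) (n+1) ≤ _ := key
    _ = 2 ^ m * (m+2) ^ n * 2 ^ n := by
        simp [Nat.card_eq_fintype_card, Fintype.card_fun]
        ring

lemma log_succ_div_tendsto :
    Tendsto (fun N : ℕ => Real.log (N + 1) / N) atTop (nhds 0) := by
  have hlog : Tendsto (fun x : ℝ => Real.log x / x) atTop (nhds 0) := by
    refine (Asymptotics.isLittleO_iff_tendsto' ?_).mp Real.isLittleO_log_id_atTop
    filter_upwards [eventually_ge_atTop (1:ℝ)] with x hx h
    linarith
  have t1 : Tendsto (fun N : ℕ => Real.log N / N) atTop (nhds 0) :=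
    hlog.comp tendsto_natCast_atTop_atTop
  have t2 := tendsto_const_div_atTop_nhds_zero_nat (Real.log 2)
  have hub : Tendsto (fun N : ℕ => Real.log 2 / N + Real.log N / N) atTop (nhds 0) := by
    simpa using t2.add t1
  refine tendsto_of_tendsto_of_tendsto_of_le_of_le' tendsto_const_nhds hub ?_ ?_
  · filter_upwards with N
    exact div_nonneg (Real.log_nonneg (by have : (0:ℝ) ≤ N := Nat.cast_nonneg N; linarith)) (Nat.cast_nonneg N)
  · filter_upwards [eventually_ge_atTop 1] with N hN
    have hN' : (1:ℝ) ≤ (N:ℝ) := by exact_mod_cast hN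
    have h1 : Real.log (N + 1) ≤ Real.log (2 * N) := by
      apply Real.log_le_log (by positivity)
      nlinarith
    have h2 : Real.log 2 + Real.log N = Real.log (2 * N) :=
      (Real.log_mul (by norm_num) (by positivity)).symm
    rw [← add_div, h2]
    exact div_le_div_of_nonneg_right h1 (by positivity)

/-- Proposition 4.4: if every tile has `(l,r) ∈ {(0,0),(0,1),(1,1)}` and tiles with
`(l,r) = (0,0)` (resp. `(1,1)`) are distinguished by their bottom colors, then
`Γ_{(n+1)×(n+1)}(B) ≤ 2^{4n}(n+2)^n` and the spatial entropy vanishes. -/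
theorem entropy_zero_of_monotone_rows (B : Finset WTile)
    (h1 : ∀ T ∈ B, (T.l, T.r) ∈
      ({((0 : Col), (0 : Col)), (0, 1), (1, 1)} : Set (Col × Col)))
    (h2 : ∀ T₁ ∈ B, ∀ T₂ ∈ B, T₁.l = 0 → T₁.r = 0 → T₂.l = 0 → T₂.r = 0 →
      T₁ ≠ T₂ → T₁.b ≠ T₂.b)
    (h3 : ∀ T₁ ∈ B, ∀ T₂ ∈ B, T₁.l = 1 → T₁.r = 1 → T₂.l = 1 → T₂.r = 1 →
      T₁ ≠ T₂ → T₁.b ≠ T₂.b) :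
    (∀ n : ℕ, 1 ≤ n → Gamma B (n + 1) (n + 1) ≤ 2 ^ (4 * n) * (n + 2) ^ n) ∧
      entropy B = 0 := by
  constructor
  · intro n hn
    calc Gamma B (n+1) (n+1) ≤ 2 ^ n * (n+2) ^ n * 2 ^ n := gamma_le_s3 B h1 h2 h3 n n
      _ = 2 ^ (2*n) * (n+2) ^ n := by rw [two_mul, pow_add]; ring
      _ ≤ 2 ^ (4*n) * (n+2) ^ n :=
          Nat.mul_le_mul_right _ (Nat.pow_le_pow_right (by omega) (by omega))
  · have hf : Tendsto (fun p : ℕ × ℕ => Real.log (Gamma B p.1 p.2) / (p.1 * p.2))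
        (atTop ×ˢ atTop) (nhds 0) := by
      have t1 : Tendsto (fun p : ℕ × ℕ => Real.log 2 / (p.2:ℝ)) (atTop ×ˢ atTop) (nhds 0) :=
        (tendsto_const_div_atTop_nhds_zero_nat (Real.log 2)).comp tendsto_snd
      have t2 : Tendsto (fun p : ℕ × ℕ => Real.log 2 / (p.1:ℝ)) (atTop ×ˢ atTop) (nhds 0) :=
        (tendsto_const_div_atTop_nhds_zero_nat (Real.log 2)).comp tendsto_fst
      have t3 : Tendsto (fun p : ℕ × ℕ => Real.log ((p.1:ℝ)+1) / (p.1:ℝ))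
          (atTop ×ˢ atTop) (nhds 0) := log_succ_div_tendsto.comp tendsto_fst
      have hub := (t1.add t2).add t3
      rw [add_zero, add_zero] at hub
      refine tendsto_of_tendsto_of_tendsto_of_le_of_le' tendsto_const_nhds hub ?_ ?_
      · filter_upwards with p
        exact div_nonneg (Real.log_natCast_nonneg _) (by positivity)
      · filter_upwards [(eventually_ge_atTop 1).prod_mk (eventually_ge_atTop 1)] with p hp
        obtain ⟨M, N⟩ := p
        obtain ⟨hM, hN⟩ := hp
        simp only at hM hN ⊢
        obtain ⟨m, rfl⟩ : ∃ m, M = m + 1 := ⟨M - 1, by omega⟩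
        obtain ⟨n', rfl⟩ : ∃ n', N = n' + 1 := ⟨N - 1, by omega⟩
        set M := m + 1
        set N := n' + 1
        have hK : Gamma B M N ≤ 2 ^ (M + N) * (M + 1) ^ N := by
          calc Gamma B M N ≤ 2 ^ m * (m+2) ^ n' * 2 ^ n' := gamma_le_s3 B h1 h2 h3 m n'
            _ = 2 ^ (m + n') * (m+2) ^ n' := by rw [pow_add]; ring
            _ ≤ 2 ^ (M + N) * (M + 1) ^ N :=
                Nat.mul_le_mul (Nat.pow_le_pow_right (by omega) (by omega))
                  (Nat.pow_le_pow_right (by omega) (by omega))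
        have hMpos : (0:ℝ) < (M:ℝ) := by exact_mod_cast Nat.succ_pos m
        have hNpos : (0:ℝ) < (N:ℝ) := by exact_mod_cast Nat.succ_pos n'
        have hlogK : Real.log (Gamma B M N) ≤
            Real.log ((2 ^ (M + N) * (M + 1) ^ N : ℕ)) := by
          rcases Nat.eq_zero_or_pos (Gamma B M N) with h0 | hpos
          · rw [h0]
            simpa using Real.log_natCast_nonneg (2 ^ (M + N) * (M + 1) ^ N)
          · exact Real.log_le_log (by exact_mod_cast hpos) (by exact_mod_cast hK)
        have hKval : Real.log ((2 ^ (M + N) * (M + 1) ^ N : ℕ)) =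
            ((M:ℝ) + N) * Real.log 2 + (N:ℝ) * Real.log ((M:ℝ) + 1) := by
          push_cast
          rw [Real.log_mul (by positivity) (by positivity), Real.log_pow, Real.log_pow]
          push_cast
          ring
        calc Real.log (Gamma B M N) / ((M:ℝ) * N)
            ≤ (((M:ℝ) + N) * Real.log 2 + (N:ℝ) * Real.log ((M:ℝ) + 1)) / ((M:ℝ) * N) :=
              div_le_div_of_nonneg_right (hlogK.trans hKval.le) (by positivity)
          _ = Real.log 2 / (N:ℝ) + Real.log 2 / (M:ℝ) + Real.log ((M:ℝ)+1) / (M:ℝ) := by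
              field_simp
    exact hf.limsup_eq
end

section
/- Let B = {(0,0,0,0)} ∪ N ⊂ {0,1}^4 be a set of two-symbol Wang tiles containing the constant-0 tile, where N ⊆ {(1,0,0,0), (1,1,0,0), (1,0,0,1), (0,1,1,0), (1,1,0,1), (1,1,1,0)} (tiles written as (b,l,t,r), i.e., N ⊆ {tiles numbered 2,3,4,7,8,12 under ψ(b,l,t,r) = 1 + 8b + 4l + 2t + r}). Then h(B) = 0. -/
open Filter

open Topology

-- auxiliary section
section Aux

variable (N B : Finset WTile)
    (hN : N ⊆ ({((0 : Col), (0 : Col), (0 : Col), (1 : Col)), (0, 0, 1, 0),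
      (0, 0, 1, 1), (0, 1, 1, 0), (0, 1, 1, 1), (1, 0, 1, 1)} : Finset WTile))
    (hB : B = insert (((0 : Col), (0 : Col), (0 : Col), (0 : Col)) : WTile) N)

include hN hB

lemma mem_B_bt {T : WTile} (h : T ∈ B) (hb : T.b = 1) : T.t = 1 := by
  subst hB
  rcases Finset.mem_insert.1 h with h | h
  · subst h; exact absurd hb (by decide)
  · have := hN h
    fin_cases this <;> first | rfl | exact absurd hb (by decide)

lemma mem_B_l {T : WTile} (h : T ∈ B) (hl : T.l = 1) : T.b = 0 ∧ T.t = 1 := by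
  subst hB
  rcases Finset.mem_insert.1 h with h | h
  · subst h; exact absurd hl (by decide)
  · have := hN h
    fin_cases this <;> first | exact ⟨rfl, rfl⟩ | exact absurd hl (by decide)

end Aux

lemma two_cases (a : Col) : a = 0 ∨ a = 1 := by fin_cases a <;> simp

section Recon

variable {m n : ℕ} {B : Finset WTile} {c : Coloring m n}

/-- threshold of column i: number of 0's among horizontal edges in the column -/
def Thr (c : Coloring m n) (i : Fin (m - 1)) : ℕ :=
  (Finset.univ.filter (fun j : Fin n => c.1 (i, j) = 0)).card

lemma thr_le (c : Coloring m n) (i : Fin (m - 1)) : Thr c i ≤ n :=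
  le_trans (Finset.card_filter_le _ _) (by simp)

lemma col_mono (hbt : ∀ T ∈ B, T.b = 1 → T.t = 1) (hc : Admissible B c)
    (i : Fin (m - 1)) :
    ∀ d k (hk : k < n) (hkd : k + d < n), c.1 (i, ⟨k, hk⟩) = 1 → c.1 (i, ⟨k + d, hkd⟩) = 1 := by
  intro d
  induction d with
  | zero => intro k hk hkd h; exact h
  | succ d ih =>
    intro k hk hkd h
    have h1 : c.1 (i, ⟨k + d, by omega⟩) = 1 := ih k hk (by omega) h
    have hsq := hc i ⟨k + d, by omega⟩
    have hbt' := hbt _ hsq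
    simp only [Coloring.square, WTile.b, WTile.t] at hbt'
    exact hbt' h1

lemma col_zero_iff (hbt : ∀ T ∈ B, T.b = 1 → T.t = 1) (hc : Admissible B c)
    (i : Fin (m - 1)) (j : Fin n) :
    c.1 (i, j) = 0 ↔ j.1 < Thr c i := by
  constructor
  · intro h0
    have hsub : Finset.Iic j ⊆ Finset.univ.filter (fun k : Fin n => c.1 (i, k) = 0) := by
      intro k hk
      simp only [Finset.mem_Iic] at hk
      simp only [Finset.mem_filter, Finset.mem_univ, true_and]
      rcases two_cases (c.1 (i, k)) with h | h
      · exact h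
      · exfalso
        have hkj : k.1 + (j.1 - k.1) < n := by have := j.2; omega
        have h1 := col_mono hbt hc i (j.1 - k.1) k.1 k.2 hkj (by
          convert h using 2)
        have hjj : (⟨k.1 + (j.1 - k.1), hkj⟩ : Fin n) = j := by
          apply Fin.ext; simp; omega
        rw [hjj, h0] at h1
        exact absurd h1 (by decide)
    have := Finset.card_le_card hsub
    rw [Fin.card_Iic] at this
    exact lt_of_lt_of_le (Nat.lt_succ_self _) this
  · intro hlt
    rcases two_cases (c.1 (i, j)) with h | h
    · exact h
    · exfalso
      have hsub : Finset.univ.filter (fun k : Fin n => c.1 (i, k) = 0) ⊆ Finset.Iio j := by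
        intro k hk
        simp only [Finset.mem_filter, Finset.mem_univ, true_and] at hk
        simp only [Finset.mem_Iio]
        by_contra hjk
        have hjk' : j.1 ≤ k.1 := by
          rw [Fin.lt_def] at hjk; omega
        have hkd : j.1 + (k.1 - j.1) < n := by have := k.2; omega
        have h1 := col_mono hbt hc i (k.1 - j.1) j.1 j.2 hkd (by convert h using 2)
        have hkk : (⟨j.1 + (k.1 - j.1), hkd⟩ : Fin n) = k := by
          apply Fin.ext; simp; omega
        rw [hkk, hk] at h1
        exact absurd h1 (by decide)
      have := Finset.card_le_card hsub
      rw [Fin.card_Iio] at this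
      unfold Thr at hlt
      omega

end Recon

section Inj

variable {m n : ℕ} {B : Finset WTile}

/-- The data recorded about an admissible coloring: thresholds, the free vertical
edge in each column, and the vertical edges in the last column. -/
def Phi (c : Coloring m n) :
    (Fin (m - 1) → Fin (n + 1)) × (Fin (m - 1) → Col) × (Fin (n - 1) → Col) :=
  (fun i => ⟨Thr c i, Nat.lt_succ_of_le (thr_le c i)⟩,
   fun i => if h : Thr c i < n ∧ 1 ≤ Thr c i then
       c.2 (⟨i.1, by have := i.2; omega⟩, ⟨Thr c i - 1, by omega⟩) else 0,
   fun j => if h : m - 1 < m then c.2 (⟨m - 1, h⟩, j) else 0)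

/-- Reconstruction of a coloring from the recorded data. -/
def Rec (t : Fin (m - 1) → Fin (n + 1)) (g : Fin (m - 1) → Col)
    (hh : Fin (n - 1) → Col) : Coloring m n :=
  (fun p => if p.2.1 < (t p.1).1 then 0 else 1,
   fun p => if hi : p.1.1 < m - 1 then
       (if (t ⟨p.1.1, hi⟩).1 = p.2.1 + 1 then g ⟨p.1.1, hi⟩ else 0)
     else hh p.2)

lemma recon (hbt : ∀ T ∈ B, T.b = 1 → T.t = 1)
    (hl : ∀ T ∈ B, T.l = 1 → T.b = 0 ∧ T.t = 1)
    {c : Coloring m n} (hc : Admissible B c) :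
    Rec (Phi c).1 (Phi c).2.1 (Phi c).2.2 = c := by
  have key := col_zero_iff hbt hc
  apply Prod.ext
  · funext p
    obtain ⟨i, j⟩ := p
    simp only [Rec, Phi]
    by_cases hj : j.1 < Thr c i
    · simp only [hj, ↓reduceIte]; exact ((key i j).2 hj).symm
    · simp only [hj, ↓reduceIte]
      rcases two_cases (c.1 (i, j)) with h | h
      · exact absurd ((key i j).1 h) hj
      · exact h.symm
  · funext p
    obtain ⟨i, j⟩ := p
    simp only [Rec, Phi]
    by_cases hi : i.1 < m - 1
    · rw [dif_pos hi]
      set i' : Fin (m - 1) := ⟨i.1, hi⟩ with hi'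
      have hfree : (c.1 (i', ⟨j.1, by have := j.2; omega⟩) = 0 ∧
          c.1 (i', ⟨j.1 + 1, by have := j.2; omega⟩) = 1) ↔ Thr c i' = j.1 + 1 := by
        constructor
        · rintro ⟨h0, h1⟩
          have a0 := (key i' _).1 h0
          have a1 : ¬ (j.1 + 1 < Thr c i') := by
            intro hlt
            have := (key i' ⟨j.1 + 1, by have := j.2; omega⟩).2 hlt
            rw [h1] at this; exact absurd this (by decide)
          simp only at a0 a1; omega
        · intro ht
          constructor
          · exact (key i' _).2 (by simp; omega)
          · rcases two_cases (c.1 (i', ⟨j.1 + 1, by have := j.2; omega⟩)) with h | h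
            · have := (key i' _).1 h; simp only at this; omega
            · exact h
      by_cases ht : Thr c i' = j.1 + 1
      · rw [if_pos ht, dif_pos (by have := j.2; omega : Thr c i' < n ∧ 1 ≤ Thr c i')]
        have hidx : ((⟨i.1, by have := i.2; omega⟩ : Fin m), (⟨Thr c i' - 1, by omega⟩ : Fin (n-1)))
            = (i, j) := by
          apply Prod.ext
          · apply Fin.ext; rfl
          · apply Fin.ext; simp; omega
        rw [hidx]
      · rw [if_neg ht]
        rcases two_cases (c.2 (i, j)) with h | h
        · exact h.symm
        · exfalso
          have hsq := hc i' j
          have hll := hl _ hsq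
          simp only [Coloring.square, WTile.l, WTile.b, WTile.t] at hll
          have : (⟨i'.1, by have := i'.2; omega⟩ : Fin m) = i := by apply Fin.ext; rfl
          rw [this] at hll
          exact ht (hfree.1 (hll h))
    · rw [dif_neg hi]
      have hm : m - 1 < m := by have := i.2; omega
      rw [dif_pos hm]
      have : (⟨m - 1, hm⟩ : Fin m) = i := by apply Fin.ext; have := i.2; simp; omega
      rw [this]

end Inj

instance instFintypeColoring (m n : ℕ) : Fintype (Coloring m n) :=
  inferInstanceAs (Fintype ((Fin (m - 1) × Fin n → Col) × (Fin m × Fin (n - 1) → Col)))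

section Count

variable (N B : Finset WTile)
    (hN : N ⊆ ({((0 : Col), (0 : Col), (0 : Col), (1 : Col)), (0, 0, 1, 0),
      (0, 0, 1, 1), (0, 1, 1, 0), (0, 1, 1, 1), (1, 0, 1, 1)} : Finset WTile))
    (hB : B = insert (((0 : Col), (0 : Col), (0 : Col), (0 : Col)) : WTile) N)

include hN hB

lemma gamma_pos (m n : ℕ) : 1 ≤ Gamma B m n := by
  have : Nonempty {c : Coloring m n // Admissible B c} := by
    refine ⟨⟨(fun _ => 0, fun _ => 0), fun i j => ?_⟩⟩
    rw [hB]
    exact Finset.mem_insert_self _ _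
  exact Nat.one_le_iff_ne_zero.2 (Nat.card_pos).ne'

lemma gamma_le_s11 (m n : ℕ) : Gamma B m n ≤ (n + 1) ^ m * 2 ^ (m + n) := by
  have hbt : ∀ T ∈ B, T.b = 1 → T.t = 1 := fun T h => mem_B_bt N B hN hB h
  have hl : ∀ T ∈ B, T.l = 1 → T.b = 0 ∧ T.t = 1 := fun T h => mem_B_l N B hN hB h
  have hinj : Function.Injective
      (fun c : {c : Coloring m n // Admissible B c} => Phi c.1) := by
    intro c c' h
    apply Subtype.ext
    have e1 := recon hbt hl c.2
    have e2 := recon hbt hl c'.2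
    rw [← e1, ← e2, show Phi c.1 = Phi c'.1 from h]
  have hcard := Nat.card_le_card_of_injective _ hinj
  calc Gamma B m n
      ≤ Nat.card ((Fin (m - 1) → Fin (n + 1)) × (Fin (m - 1) → Col) × (Fin (n - 1) → Col)) :=
        hcard
    _ = (n + 1) ^ (m - 1) * (2 ^ (m - 1) * 2 ^ (n - 1)) := by
        simp [Nat.card_eq_fintype_card]
    _ ≤ (n + 1) ^ m * 2 ^ (m + n) := by
        have h1 : (n + 1) ^ (m - 1) ≤ (n + 1) ^ m :=
          Nat.pow_le_pow_right (by omega) (by omega)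
        have h2 : 2 ^ (m - 1) * 2 ^ (n - 1) ≤ 2 ^ (m + n) := by
          rw [← pow_add]
          exact Nat.pow_le_pow_right (by omega) (by omega)
        exact Nat.mul_le_mul h1 h2
end Count

lemma tendsto_log_succ_div : Tendsto (fun k : ℕ => Real.log (k + 1) / k) atTop (𝓝 0) := by
  have ha : Tendsto (fun x : ℝ => Real.log x / x) atTop (𝓝 0) :=
    Real.isLittleO_log_id_atTop.tendsto_div_nhds_zero
  have hb : Tendsto (fun k : ℕ => ((k : ℝ) + 1)) atTop atTop :=
    tendsto_atTop_add_const_right _ 1 tendsto_natCast_atTop_atTop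
  have hc : Tendsto (fun k : ℕ => Real.log ((k : ℝ) + 1) / ((k : ℝ) + 1)) atTop (𝓝 0) :=
    ha.comp hb
  have hd : Tendsto (fun k : ℕ => ((k : ℝ) + 1) / k) atTop (𝓝 1) := by
    have h1 : Tendsto (fun k : ℕ => 1 + 1 / (k : ℝ)) atTop (𝓝 1) := by
      simpa using tendsto_const_nhds.add (tendsto_one_div_atTop_nhds_zero_nat (𝕜 := ℝ))
    apply h1.congr'
    filter_upwards [eventually_ge_atTop 1] with k hk
    have hk0 : (k : ℝ) ≠ 0 := by positivity
    field_simp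
  have hmul := hc.mul hd
  rw [zero_mul] at hmul
  apply hmul.congr'
  filter_upwards [eventually_ge_atTop 1] with k hk
  have hk0 : (k : ℝ) ≠ 0 := by positivity
  field_simp

/-- Entry 1 of Table A.2: any tile set consisting of the constant-0 tile `O`
together with tiles among numbers 2, 3, 4, 7, 8, 12 has zero spatial entropy. -/
theorem entropy_zero_O_union_N (N B : Finset WTile)
    (hN : N ⊆ ({((0 : Col), (0 : Col), (0 : Col), (1 : Col)), (0, 0, 1, 0),
      (0, 0, 1, 1), (0, 1, 1, 0), (0, 1, 1, 1), (1, 0, 1, 1)} : Finset WTile))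
    (hB : B = insert (((0 : Col), (0 : Col), (0 : Col), (0 : Col)) : WTile) N) :
    entropy B = 0 := by

  have hpos := gamma_pos N B hN hB
  have hub := gamma_le_s11 N B hN hB
  have htend : Tendsto (fun p : ℕ × ℕ => Real.log (Gamma B p.1 p.2) / (p.1 * p.2))
      (atTop ×ˢ atTop) (𝓝 0) := by
    apply squeeze_zero' (g := fun p : ℕ × ℕ =>
      Real.log (p.2 + 1) / p.2 + Real.log 2 / p.2 + Real.log 2 / p.1)
    · filter_upwards with p
      refine div_nonneg (Real.log_nonneg ?_) (by positivity)
      exact_mod_cast hpos p.1 p.2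
    · have hev : ∀ᶠ p : ℕ × ℕ in atTop ×ˢ atTop, 1 ≤ p.1 ∧ 1 ≤ p.2 :=
        (tendsto_fst.eventually (eventually_ge_atTop 1)).and
          (tendsto_snd.eventually (eventually_ge_atTop 1))
      filter_upwards [hev] with p hp
      obtain ⟨hm, hn⟩ := hp
      set m := p.1
      set n := p.2
      have hm0 : (0 : ℝ) < m := by exact_mod_cast hm
      have hn0 : (0 : ℝ) < n := by exact_mod_cast hn
      have hG0 : (0 : ℝ) < (Gamma B m n : ℝ) := by exact_mod_cast hpos m n
      have h1 : (Gamma B m n : ℝ) ≤ ((n : ℝ) + 1) ^ m * 2 ^ (m + n) := by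
        have := hub m n
        push_cast
        exact_mod_cast this
      have hlog : Real.log (Gamma B m n) ≤
          m * Real.log ((n : ℝ) + 1) + (m + n) * Real.log 2 := by
        calc Real.log (Gamma B m n) ≤ Real.log (((n : ℝ) + 1) ^ m * 2 ^ (m + n)) :=
              Real.log_le_log hG0 h1
          _ = m * Real.log ((n : ℝ) + 1) + (m + n) * Real.log 2 := by
              rw [Real.log_mul (by positivity) (by positivity), Real.log_pow, Real.log_pow]
              push_cast
              ring
      have hmn : (0 : ℝ) < (m : ℝ) * n := by positivity
      calc Real.log (Gamma B m n) / ((m : ℝ) * n)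
          ≤ ((m : ℝ) * Real.log ((n : ℝ) + 1) + ((m : ℝ) + n) * Real.log 2) / ((m : ℝ) * n) :=
            (div_le_div_iff_of_pos_right hmn).2 hlog
        _ = Real.log ((n : ℝ) + 1) / n + Real.log 2 / n + Real.log 2 / m := by
            field_simp
            ring
    · have t2 : Tendsto (fun k : ℕ => Real.log 2 / (k : ℝ)) atTop (𝓝 0) :=
        tendsto_const_nhds.div_atTop tendsto_natCast_atTop_atTop
      have := ((tendsto_log_succ_div.comp tendsto_snd).add (t2.comp tendsto_snd)).add
        (t2.comp tendsto_fst)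
      simpa using this
  exact htend.limsup_eq
end

section
/- Every pattern admissible for a two-symbol Wang tile set B in which (b(B),l(B)) ≠ (0,1) and (t(B),r(B)) ≠ (1,0) for all B ∈ B has weakly decreasing values along every anti-diagonal: precisely, if U is a B-admissible coloring of the (n+1)×(n+1) grid, then for every edge e and the edge e' obtained by moving one step in the direction (−1,+1) along the anti-diagonal staircase of edges, the color of e' is ≤ the color of e. -/
open Filter

lemma fin2_le_of_ne {a b : Fin 2} (h : ¬(b = 0 ∧ a = 1)) : a ≤ b := by
  fin_cases a <;> fin_cases b <;> simp_all

lemma fin2_le_of_ne' {a b : Fin 2} (h : ¬(a = 1 ∧ b = 0)) : a ≤ b := by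
  fin_cases a <;> fin_cases b <;> simp_all

/-- Key lemma of Proposition 4.3: if every tile of `B` satisfies `(b,l) ≠ (0,1)` and
`(t,r) ≠ (1,0)`, then in every `B`-admissible coloring of the `(n+1)×(n+1)` lattice
the edge colors weakly decrease along every anti-diagonal staircase: for each unit
square `(i,j)`, the left edge color is `≤` the bottom edge color (one staircase step
from a horizontal edge to the vertical edge up-left of it), and the top edge color is
`≤` the right edge color (one staircase step from a vertical edge to the horizontal
edge up-left of it). -/
theorem antidiagonal_monotone (B : Finset WTile)
    (hB : ∀ T ∈ B, (T.b, T.l) ≠ ((0 : Col), (1 : Col)) ∧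
      (T.t, T.r) ≠ ((1 : Col), (0 : Col)))
    (n : ℕ) (c : Coloring (n + 1) (n + 1)) (hc : Admissible B c) :
    ∀ i j : Fin n,
      c.2 (⟨i.1, by have := i.2; omega⟩, ⟨j.1, by have := j.2; omega⟩) ≤
          c.1 (⟨i.1, by have := i.2; omega⟩, ⟨j.1, by have := j.2; omega⟩) ∧
        c.1 (⟨i.1, by have := i.2; omega⟩, ⟨j.1 + 1, by have := j.2; omega⟩) ≤
          c.2 (⟨i.1 + 1, by have := i.2; omega⟩, ⟨j.1, by have := j.2; omega⟩) := by
  intro i j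
  have h := hB _ (hc ⟨i.1, by omega⟩ ⟨j.1, by omega⟩)
  simp only [Coloring.square, WTile.b, WTile.l, WTile.t, WTile.r, ne_eq,
    Prod.mk.injEq, not_and] at h
  exact ⟨fin2_le_of_ne (fun ⟨h0, h1⟩ => h.1 h0 h1),
         fin2_le_of_ne' (fun ⟨h0, h1⟩ => h.2 h0 h1)⟩
end
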